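/- Let r > 1, 0 < θ < π/2 with r·cos θ < 1, and h > r/√(r² − 1). Then h·sin θ + √((r² − 1)h² − r²)·cos θ > √( (1 − r²cos²θ)h² + r²cos²θ ). -/

import Mathlib

/-!
Write `s = sin θ`, `c = cos θ` and `A = (r² - 1)h² - r²`, which is positive on the Lambert cube
range. Using `s² + c² = 1`, the left-hand radicand equals `(h s)² - (c √A)²`, and
`√(a² - b²) < a + b` whenever `a ≥ 0` and `b > 0`.
-/

open Real

theorem sqrt_sq_sub_sq_lt_add {a b : ℝ} (ha : 0 ≤ a) (hb : 0 < b) :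
    √(a ^ 2 - b ^ 2) < a + b := by
  rw [sqrt_lt' (by positivity)]
  nlinarith

theorem sq_lt_sub_one_mul_sq_of_div_sqrt_lt {r h : ℝ} (hr : 1 < r)
    (hh : r / √(r ^ 2 - 1) < h) : r ^ 2 < (r ^ 2 - 1) * h ^ 2 := by
  have hs : 0 < √(r ^ 2 - 1) := sqrt_pos.2 (by nlinarith)
  have hlt : r < h * √(r ^ 2 - 1) := (div_lt_iff₀ hs).1 hh
  calc r ^ 2 < (h * √(r ^ 2 - 1)) ^ 2 := pow_lt_pow_left₀ hlt (by linarith) two_ne_zero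
    _ = (r ^ 2 - 1) * h ^ 2 := by rw [mul_pow, sq_sqrt (by nlinarith)]; ring

theorem lambert_cube_edge_length_pos_general (r θ h : ℝ) (hr : 1 < r) (hθ0 : 0 < θ)
    (hθ1 : θ < π / 2) (hh : r / Real.sqrt (r ^ 2 - 1) < h) :
    Real.sqrt ((1 - r ^ 2 * Real.cos θ ^ 2) * h ^ 2 + r ^ 2 * Real.cos θ ^ 2) <
      h * Real.sin θ + Real.sqrt ((r ^ 2 - 1) * h ^ 2 - r ^ 2) * Real.cos θ := by
  have hc : 0 < cos θ := cos_pos_of_mem_Ioo ⟨by linarith [pi_pos], hθ1⟩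
  have hs : 0 < sin θ := sin_pos_of_pos_of_lt_pi hθ0 (by linarith [pi_pos])
  have hh0 : 0 < h := (div_pos (by linarith) (sqrt_pos.2 (by nlinarith))).trans hh
  have hA : 0 < (r ^ 2 - 1) * h ^ 2 - r ^ 2 := by
    linarith [sq_lt_sub_one_mul_sq_of_div_sqrt_lt hr hh]
  have hradicand : (1 - r ^ 2 * cos θ ^ 2) * h ^ 2 + r ^ 2 * cos θ ^ 2 =
      (h * sin θ) ^ 2 - (√((r ^ 2 - 1) * h ^ 2 - r ^ 2) * cos θ) ^ 2 := by
    rw [mul_pow _ (cos θ), sq_sqrt hA.le]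
    linear_combination -h ^ 2 * cos_sq_add_sin_sq θ
  rw [hradicand]
  exact sqrt_sq_sub_sq_lt_add (by positivity) (by positivity)

theorem lambert_cube_edge_length_pos (r θ h : ℝ) (hr : 1 < r) (hθ0 : 0 < θ)
    (hθ1 : θ < π / 2) (hrθ : r * Real.cos θ < 1) (hh : r / Real.sqrt (r ^ 2 - 1) < h) :
    Real.sqrt ((1 - r ^ 2 * Real.cos θ ^ 2) * h ^ 2 + r ^ 2 * Real.cos θ ^ 2) <
      h * Real.sin θ + Real.sqrt ((r ^ 2 - 1) * h ^ 2 - r ^ 2) * Real.cos θ :=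
  lambert_cube_edge_length_pos_general r θ h hr hθ0 hθ1 hh
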